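/- Fix r ≥ 0, σ > 0, Δt > 0, γ̂ ≥ γ̂* > 0 and consider the vega of the liquidity token: ∂V/∂σ(P) for V(P;σ) = 2γ̂√P/γ̂*(σ), where γ̂*(σ) := 2[-1 + (Φ((r+σ²/2)√Δt/σ) - e^{-rΔt}Φ((r-σ²/2)√Δt/σ))/(1 - e^{-(r+σ²/4)Δt/2})]^{-1}. Then for each fixed P > 0, ∂V/∂σ(P) = (γ̂√P·e^{-(r+σ²/4)Δt/2}/(1 - e^{-(r+σ²/4)Δt/2}))·[√(Δt/(2π))·e^{-r²Δt/(2σ²)} - (σΔt/4)·(Φ((r+σ²/2)√Δt/σ) - e^{-rΔt}Φ((r-σ²/2)√Δt/σ))/(1 - e^{-(r+σ²/4)Δt/2})]. -/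

import Mathlib

/-!
The numerator `N(σ) = Φ(d₊) - e^{-rΔt} Φ(d₋)` of `1/γ̂*` is the at-the-money Black–Scholes call
price, with `d± = (r ± σ²/2)√Δt/σ`. Since `e^{-rΔt} φ(d₋) = φ(d₊)`, the two chain-rule terms of
`N'` combine to the classical vega `φ(d₊)√Δt`, and `φ(d₊)√Δt` factors as
`√(Δt/2π) e^{-r²Δt/(2σ²)} e^{-(r+σ²/4)Δt/2}`. The theorem is then the quotient rule applied to
`V = γ̂√P (-1 + N/D)` with `D(σ) = 1 - e^{-(r+σ²/4)Δt/2}`.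
-/

open Real

/-- standard normal CDF -/
noncomputable def Phi (x : ℝ) : ℝ := ∫ t in Set.Iic x, Real.exp (-t^2/2) / Real.sqrt (2*π)

/-- critical fee level γ̂*(σ) from the CPMM valuation theorem -/
noncomputable def gammaStar (r Δt σ : ℝ) : ℝ :=
  2 * (-1 + (Phi ((r + σ^2/2) * Real.sqrt Δt / σ)
      - Real.exp (-(r*Δt)) * Phi ((r - σ^2/2) * Real.sqrt Δt / σ)) /
      (1 - Real.exp (-(r + σ^2/4)*Δt/2)))⁻¹

open MeasureTheory

noncomputable def phi (x : ℝ) : ℝ := exp (-x ^ 2 / 2) / √(2 * π)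

lemma continuous_phi : Continuous phi := by
  unfold phi; fun_prop

lemma integrable_phi : Integrable phi := by
  convert (integrable_exp_neg_mul_sq (by norm_num : (0 : ℝ) < 1 / 2)).div_const √(2 * π)
    using 2 with t
  unfold phi; ring_nf

lemma Phi_eq_integral_add_Phi_zero (x : ℝ) : Phi x = (∫ t in (0 : ℝ)..x, phi t) + Phi 0 := by
  have h := intervalIntegral.integral_Iic_sub_Iic (μ := volume) (a := 0) (b := x)
    integrable_phi.integrableOn integrable_phi.integrableOn
  simp only [Phi, phi] at h ⊢
  linarith

lemma hasDerivAt_Phi (x : ℝ) : HasDerivAt Phi (phi x) x := by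
  refine .congr_of_eventuallyEq ?_ (.of_forall Phi_eq_integral_add_Phi_zero)
  exact (intervalIntegral.integral_hasDerivAt_right integrable_phi.intervalIntegrable
    continuous_phi.aestronglyMeasurable.stronglyMeasurableAtFilter
    continuous_phi.continuousAt).add_const _

namespace BlackScholes

variable (r Δt : ℝ)

noncomputable def dPlus (σ : ℝ) : ℝ := (r + σ ^ 2 / 2) * √Δt / σ

noncomputable def dMinus (σ : ℝ) : ℝ := (r - σ ^ 2 / 2) * √Δt / σ

noncomputable def callPrice (σ : ℝ) : ℝ :=
  Phi (dPlus r Δt σ) - exp (-(r * Δt)) * Phi (dMinus r Δt σ)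

variable {r Δt} {σ : ℝ}

lemma hasDerivAt_dPlus (hσ : σ ≠ 0) :
    HasDerivAt (dPlus r Δt) (√Δt * (1 / 2 - r / σ ^ 2)) σ := by
  have h := ((((hasDerivAt_pow 2 σ).div_const 2).const_add r).mul_const √Δt).div
    (hasDerivAt_id' σ) hσ
  refine h.congr_deriv ?_
  field_simp
  ring

lemma hasDerivAt_dMinus (hσ : σ ≠ 0) :
    HasDerivAt (dMinus r Δt) (-(√Δt * (1 / 2 + r / σ ^ 2))) σ := by
  have h := ((((hasDerivAt_pow 2 σ).div_const 2).const_sub r).mul_const √Δt).div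
    (hasDerivAt_id' σ) hσ
  refine h.congr_deriv ?_
  field_simp
  ring

lemma exp_mul_phi_dMinus (hΔt : 0 ≤ Δt) (hσ : σ ≠ 0) :
    exp (-(r * Δt)) * phi (dMinus r Δt σ) = phi (dPlus r Δt σ) := by
  unfold phi dPlus dMinus
  rw [← mul_div_assoc, ← exp_add]
  congr 2
  field_simp
  rw [sq_sqrt hΔt]
  ring

lemma hasDerivAt_callPrice (hΔt : 0 ≤ Δt) (hσ : σ ≠ 0) :
    HasDerivAt (callPrice r Δt) (phi (dPlus r Δt σ) * √Δt) σ := by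
  have h := ((hasDerivAt_Phi (dPlus r Δt σ)).comp σ (hasDerivAt_dPlus hσ)).sub
    (((hasDerivAt_Phi (dMinus r Δt σ)).comp σ (hasDerivAt_dMinus hσ)).const_mul (exp (-(r * Δt))))
  refine h.congr_deriv ?_
  linear_combination √Δt * (1 / 2 + r / σ ^ 2) * exp_mul_phi_dMinus hΔt hσ

lemma phi_dPlus_mul_sqrt (hΔt : 0 ≤ Δt) (hσ : σ ≠ 0) :
    phi (dPlus r Δt σ) * √Δt =
      √(Δt / (2 * π)) * exp (-r ^ 2 * Δt / (2 * σ ^ 2)) * exp (-(r + σ ^ 2 / 4) * Δt / 2) := by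
  have hexp : exp (-dPlus r Δt σ ^ 2 / 2) =
      exp (-r ^ 2 * Δt / (2 * σ ^ 2)) * exp (-(r + σ ^ 2 / 4) * Δt / 2) := by
    rw [← exp_add]
    congr 1
    unfold dPlus
    field_simp
    rw [sq_sqrt hΔt]
    ring
  rw [phi, hexp, sqrt_div hΔt]
  ring

end BlackScholes

open BlackScholes

lemma hasDerivAt_one_sub_exp (r Δt σ : ℝ) :
    HasDerivAt (fun s : ℝ => 1 - exp (-(r + s ^ 2 / 4) * Δt / 2))
      (exp (-(r + σ ^ 2 / 4) * Δt / 2) * (σ * Δt / 4)) σ := by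
  have hexponent : HasDerivAt (fun s : ℝ => -(r + s ^ 2 / 4) * Δt / 2) (-(σ * Δt / 4)) σ := by
    refine ((((hasDerivAt_pow 2 σ).div_const 4).const_add r).neg.mul_const Δt).div_const 2
      |>.congr_deriv ?_
    ring
  exact hexponent.exp.const_sub 1 |>.congr_deriv (by ring)

lemma one_sub_exp_pos {r Δt σ : ℝ} (hr : 0 ≤ r) (hΔt : 0 < Δt) (hσ : σ ≠ 0) :
    0 < 1 - exp (-(r + σ ^ 2 / 4) * Δt / 2) := by
  rw [sub_pos, exp_lt_one_iff]
  have : 0 < (r + σ ^ 2 / 4) * Δt := by positivity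
  linarith

theorem stmt15_general (r Δt γ P σ : ℝ) (hr : 0 ≤ r) (hΔt : 0 < Δt) (hσ : 0 < σ) :
    HasDerivAt (fun s : ℝ => 2 * γ * Real.sqrt P / gammaStar r Δt s)
      ((γ * Real.sqrt P * Real.exp (-(r + σ^2/4)*Δt/2) /
          (1 - Real.exp (-(r + σ^2/4)*Δt/2))) *
        (Real.sqrt (Δt/(2*π)) * Real.exp (-r^2*Δt/(2*σ^2))
          - (σ*Δt/4) *
            (Phi ((r + σ^2/2) * Real.sqrt Δt / σ)
              - Real.exp (-(r*Δt)) * Phi ((r - σ^2/2) * Real.sqrt Δt / σ)) /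
            (1 - Real.exp (-(r + σ^2/4)*Δt/2)))) σ := by
  have hD : 1 - exp (-(r + σ ^ 2 / 4) * Δt / 2) ≠ 0 := (one_sub_exp_pos hr hΔt hσ.ne').ne'
  have hV : (fun s : ℝ => 2 * γ * √P / gammaStar r Δt s) = fun s =>
      γ * √P * (-1 + callPrice r Δt s / (1 - exp (-(r + s ^ 2 / 4) * Δt / 2))) := by
    funext s
    rw [gammaStar, div_eq_mul_inv, mul_inv, inv_inv]
    unfold callPrice dPlus dMinus
    ring
  rw [hV]
  refine (((hasDerivAt_callPrice hΔt.le hσ.ne').div (hasDerivAt_one_sub_exp r Δt σ) hD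
    |>.const_add (-1)).const_mul (γ * √P)).congr_deriv ?_
  rw [phi_dPlus_mul_sqrt hΔt.le hσ.ne']
  generalize exp (-(r + σ ^ 2 / 4) * Δt / 2) = E at hD ⊢
  unfold callPrice dPlus dMinus
  field_simp

theorem stmt15 (r Δt γ P σ : ℝ) (hr : 0 ≤ r) (hΔt : 0 < Δt) (hσ : 0 < σ)
    (hP : 0 < P) (hγs : 0 < gammaStar r Δt σ) (hγ : gammaStar r Δt σ ≤ γ) :
    HasDerivAt (fun s : ℝ => 2 * γ * Real.sqrt P / gammaStar r Δt s)
      ((γ * Real.sqrt P * Real.exp (-(r + σ^2/4)*Δt/2) /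
          (1 - Real.exp (-(r + σ^2/4)*Δt/2))) *
        (Real.sqrt (Δt/(2*π)) * Real.exp (-r^2*Δt/(2*σ^2))
          - (σ*Δt/4) *
            (Phi ((r + σ^2/2) * Real.sqrt Δt / σ)
              - Real.exp (-(r*Δt)) * Phi ((r - σ^2/2) * Real.sqrt Δt / σ)) /
            (1 - Real.exp (-(r + σ^2/4)*Δt/2)))) σ :=
  stmt15_general r Δt γ P σ hr hΔt hσ
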